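/- Let a₂ > 8/√15 and let G(s) = -(1/3)s³ + (a₂/4)s⁴ - (1/5)s⁵ (case DFD with a₁ = -1, a₃ = -1). Then G has a positive root c (the smallest positive root), and g(c) > 0 where g(s) = -s² + a₂s³ - s⁴. Conversely if a₂ ≤ 8/√15 then there is no positive root c of G with g(c) > 0. -/

import Mathlib

/-!
Since `G s = -(1/5) s³ q(s)` with `q(s) = s² - (5a₂/4) s + 5/3`, the positive zeros of `G` are those
of `q`, and at such a zero `g(s) = s²(5 - 3s²)/15`. The roots of `q` multiply to `5/3`, so `g > 0`
exactly at the smaller of two distinct positive roots, which exist iff `a₂ > 0` and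
`15 a₂² > 64`. Conversely, at a root `c` we have `15 a₂ c - 8√15 c = (4/3)(√15 - 3c)²`, so a
root with `3c² ≠ 5` forces `a₂ > 8/√15`.
-/

noncomputable section

namespace DFD

open Real

def G (a s : ℝ) : ℝ := -(1/3) * s^3 + (a/4) * s^4 - (1/5) * s^5

def g (a s : ℝ) : ℝ := -s^2 + a * s^3 - s^4

def q (a s : ℝ) : ℝ := s^2 - (5 * a / 4) * s + 5/3

variable {a s c : ℝ}

theorem G_eq_mul_q (a s : ℝ) : G a s = -(1/5) * s^3 * q a s := by
  unfold G q; ring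

theorem G_eq_zero_iff (hs : s ≠ 0) : G a s = 0 ↔ q a s = 0 := by
  simp [G_eq_mul_q, hs]

theorem g_eq_of_q_eq_zero (hq : q a s = 0) : g a s = s^2 * (5 - 3 * s^2) / 15 := by
  unfold q g at *
  linear_combination (-(4/5) * s^2) * hq

theorem g_pos_iff_of_q_eq_zero (hs : s ≠ 0) (hq : q a s = 0) : 0 < g a s ↔ 3 * s^2 < 5 := by
  have : 0 < s^2 := by positivity
  rw [g_eq_of_q_eq_zero hq]
  constructor <;> intro h <;> nlinarith

theorem threshold_lt_of_q_eq_zero (hc : 0 < c) (hq : q a c = 0) (hc5 : 3 * c^2 ≠ 5) :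
    8 / √15 < a := by
  have h15 : √15 ^ 2 = 15 := sq_sqrt (by norm_num)
  have hsqrt : 0 < √15 := by positivity
  have key : c * (15 * a - 8 * √15) = (4/3) * (√15 - 3 * c)^2 := by
    unfold q at hq
    linear_combination (-12) * hq - (4/3) * h15
  have hne : √15 - 3 * c ≠ 0 := by
    intro h
    apply hc5
    nlinarith
  have : 0 < c * (15 * a - 8 * √15) := by rw [key]; positivity
  have : 8 * √15 < 15 * a := by nlinarith
  rw [div_lt_iff₀ hsqrt]
  nlinarith

theorem pos_and_sq_of_threshold_lt (ha : 8 / √15 < a) : 0 < a ∧ 64 < 15 * a^2 := by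
  have hsqrt : 0 < √15 := by positivity
  have h15 : √15 ^ 2 = 15 := sq_sqrt (by norm_num)
  rw [div_lt_iff₀ hsqrt] at ha
  have ha0 : 0 < a := by nlinarith
  exact ⟨ha0, by nlinarith⟩

/-- The discriminant of `q`, scaled by `24²`. -/
def disc (a : ℝ) : ℝ := 225 * a^2 - 960

def smallRoot (a : ℝ) : ℝ := (15 * a - √(disc a)) / 24

def largeRoot (a : ℝ) : ℝ := (15 * a + √(disc a)) / 24

theorem q_eq_mul_sub_roots (hd : 0 ≤ disc a) (s : ℝ) :
    q a s = (s - smallRoot a) * (s - largeRoot a) := by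
  have := sq_sqrt hd
  unfold q smallRoot largeRoot disc at *
  linear_combination (1/576) * this

theorem smallRoot_mul_largeRoot (hd : 0 ≤ disc a) : smallRoot a * largeRoot a = 5/3 := by
  have := q_eq_mul_sub_roots hd 0
  unfold q at this
  linarith

theorem smallRoot_lt_largeRoot (hd : 0 < disc a) : smallRoot a < largeRoot a := by
  have := sqrt_pos.2 hd
  unfold smallRoot largeRoot
  linarith

theorem smallRoot_pos (ha : 0 < a) : 0 < smallRoot a := by
  have hlt : √(disc a) < 15 * a := by
    rw [sqrt_lt' (by positivity)]
    unfold disc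
    linarith
  unfold smallRoot
  linarith

theorem q_pos_of_lt_smallRoot (hd : 0 < disc a) (hs : s < smallRoot a) : 0 < q a s := by
  rw [q_eq_mul_sub_roots hd.le]
  have := smallRoot_lt_largeRoot hd
  nlinarith

theorem three_mul_smallRoot_sq_lt (ha : 0 < a) (hd : 0 < disc a) : 3 * smallRoot a ^ 2 < 5 := by
  have hpos := smallRoot_pos ha
  have hlt := smallRoot_lt_largeRoot hd
  have := smallRoot_mul_largeRoot hd.le
  nlinarith

end DFD

end

open DFD

theorem stmt2 (a₂ : ℝ) :
    let G : ℝ → ℝ := fun s => -(1/3) * s^3 + (a₂/4) * s^4 - (1/5) * s^5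
    let g : ℝ → ℝ := fun s => -s^2 + a₂ * s^3 - s^4
    (8 / Real.sqrt 15 < a₂ →
      ∃ c : ℝ, 0 < c ∧ G c = 0 ∧ (∀ s : ℝ, 0 < s → s < c → G s ≠ 0) ∧ 0 < g c) ∧
    (a₂ ≤ 8 / Real.sqrt 15 → ¬ ∃ c : ℝ, 0 < c ∧ G c = 0 ∧ 0 < g c) := by
  refine ⟨fun ha => ?_, fun ha ⟨c, hc, hGc, hgc⟩ => ?_⟩
  · obtain ⟨ha0, hsq⟩ := pos_and_sq_of_threshold_lt ha
    have hd : 0 < disc a₂ := by unfold disc; linarith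
    have hc := smallRoot_pos ha0
    have hq : q a₂ (smallRoot a₂) = 0 := by simp [q_eq_mul_sub_roots hd.le]
    refine ⟨smallRoot a₂, hc, (G_eq_zero_iff (a := a₂) hc.ne').2 hq, fun s hs hsc => ?_,
      (g_pos_iff_of_q_eq_zero hc.ne' hq).2 (three_mul_smallRoot_sq_lt ha0 hd)⟩
    exact (G_eq_zero_iff (a := a₂) hs.ne').not.2 (q_pos_of_lt_smallRoot hd hsc).ne'
  · have hq : q a₂ c = 0 := (G_eq_zero_iff hc.ne').1 hGc
    have hc5 := (g_pos_iff_of_q_eq_zero (a := a₂) hc.ne' hq).1 hgc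
    exact ha.not_gt (threshold_lt_of_q_eq_zero hc hq hc5.ne)
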